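/- For λ₁, λ₂, w₂ ∈ ℝ with |λ₁| ≤ 1, |λ₂| ≤ 1, |w₂| ≤ 1, the matrix χ = (1/2)[[1+λ₁+λ₂, 0, w₂],[0, 1+λ₁-λ₂, 0],[w₂, 0, 1-λ₁+λ₂]] is positive semidefinite if and only if 1+λ₁-λ₂ ≥ 0 and w₂² ≤ (λ₂+1)² - λ₁². -/

import Mathlib

/-!
After removing the factor `1/2`, the matrix is the direct sum of the `1 × 1` block
`b = 1 + l₁ - l₂` (coordinate 1) and the `2 × 2` block `[[a, w₂], [w₂, c]]` with
`a = 1 + l₁ + l₂`, `c = 1 - l₁ + l₂` (coordinates 0 and 2). It is positive semidefinite iff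
`b ≥ 0`, `a, c ≥ 0` and `w₂² ≤ a c = (l₂ + 1)² - l₁²`; since `a + c = 2 (1 + l₂) ≥ 0`,
the signs of `a` and `c` follow from the determinant condition.
-/

lemma Matrix.posSemidef_smul_iff {n : Type*} [Fintype n] {A : Matrix n n ℝ} {r : ℝ}
    (hr : 0 < r) : (r • A).PosSemidef ↔ A.PosSemidef := by
  refine ⟨fun h => ?_, fun h => h.smul hr.le⟩
  simpa [smul_smul, inv_mul_cancel₀ hr.ne'] using h.smul (inv_nonneg.mpr hr.le)

lemma binary_quadratic_nonneg_iff (a c w : ℝ) :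
    (∀ x y : ℝ, 0 ≤ a * x ^ 2 + 2 * w * x * y + c * y ^ 2) ↔ 0 ≤ a ∧ 0 ≤ c ∧ w ^ 2 ≤ a * c := by
  constructor
  · intro h
    have ha : 0 ≤ a := by simpa using h 1 0
    have hc : 0 ≤ c := by simpa using h 0 1
    have hwa : 0 ≤ a * (a * c - w ^ 2) := by linarith [h w (-a)]
    have hcw : 0 ≤ c * (a * c - w ^ 2) := by linarith [h c (-w)]
    refine ⟨ha, hc, ?_⟩
    rcases (add_nonneg ha hc).eq_or_lt with hac | hac
    · obtain ⟨rfl, rfl⟩ : a = 0 ∧ c = 0 := ⟨by linarith, by linarith⟩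
      linarith [h w (-1)]
    · exact sub_nonneg.mp (nonneg_of_mul_nonneg_right (by linarith) hac)
  · rintro ⟨ha, hc, hw⟩ x y
    rcases ha.eq_or_lt with rfl | hapos
    · obtain rfl : w = 0 := by nlinarith [sq_nonneg w]
      nlinarith [sq_nonneg y]
    · -- `a · q(x, y) = (a x + w y)² + (a c - w²) y²`
      have : 0 ≤ a * (a * x ^ 2 + 2 * w * x * y + c * y ^ 2) := by
        nlinarith [sq_nonneg (a * x + w * y), mul_nonneg (sub_nonneg.mpr hw) (sq_nonneg y)]
      exact nonneg_of_mul_nonneg_right (by linarith) hapos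

lemma posSemidef_fin_three_corner_iff (a b c w : ℝ) :
    (!![a, 0, w; 0, b, 0; w, 0, c] : Matrix (Fin 3) (Fin 3) ℝ).PosSemidef ↔
      0 ≤ b ∧ 0 ≤ a ∧ 0 ≤ c ∧ w ^ 2 ≤ a * c := by
  rw [Matrix.posSemidef_iff_dotProduct_mulVec, ← binary_quadratic_nonneg_iff]
  have hherm : (!![a, 0, w; 0, b, 0; w, 0, c] : Matrix (Fin 3) (Fin 3) ℝ).IsHermitian := by
    ext i j
    fin_cases i <;> fin_cases j <;> rfl
  have hform : ∀ v : Fin 3 → ℝ, star v ⬝ᵥ (!![a, 0, w; 0, b, 0; w, 0, c]).mulVec v =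
      (a * v 0 ^ 2 + 2 * w * v 0 * v 2 + c * v 2 ^ 2) + b * v 1 ^ 2 := by
    intro v
    simp only [dotProduct, Pi.star_apply, star_trivial, Matrix.mulVec, Matrix.of_apply,
      Matrix.cons_val', Matrix.cons_val_fin_one, Fin.sum_univ_three, Fin.isValue, Matrix.cons_val_zero,
      Matrix.cons_val_one, Matrix.cons_val, zero_mul, add_zero, zero_add]
    ring
  simp only [hform, hherm, true_and]
  constructor
  · intro h
    refine ⟨by simpa using h ![0, 1, 0], fun x y => by simpa using h ![x, 0, y]⟩
  · rintro ⟨hb, hq⟩ v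
    exact add_nonneg (hq _ _) (mul_nonneg hb (sq_nonneg _))

lemma nonneg_and_nonneg_of_sq_le_mul {a c w : ℝ} (hac : 0 ≤ a + c) (hw : w ^ 2 ≤ a * c) :
    0 ≤ a ∧ 0 ≤ c := by
  constructor <;> nlinarith [sq_nonneg w]

theorem stmt_10_general (l₁ l₂ w₂ : ℝ) (h₂ : |l₂| ≤ 1) :
    let χ : Matrix (Fin 3) (Fin 3) ℝ :=
      ((1:ℝ)/2) • !![1 + l₁ + l₂, 0, w₂; 0, 1 + l₁ - l₂, 0; w₂, 0, 1 - l₁ + l₂]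
    χ.PosSemidef ↔ (1 + l₁ - l₂ ≥ 0 ∧ w₂ ^ 2 ≤ (l₂ + 1) ^ 2 - l₁ ^ 2) := by
  intro χ
  have hsum : 0 ≤ (1 + l₁ + l₂) + (1 - l₁ + l₂) := by linarith [(abs_le.mp h₂).1]
  have hdet : (1 + l₁ + l₂) * (1 - l₁ + l₂) = (l₂ + 1) ^ 2 - l₁ ^ 2 := by ring
  rw [Matrix.posSemidef_smul_iff (by norm_num), posSemidef_fin_three_corner_iff, hdet]
  constructor
  · rintro ⟨hb, -, -, hw⟩
    exact ⟨hb, hw⟩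
  · rintro ⟨hb, hw⟩
    obtain ⟨ha, hc⟩ := nonneg_and_nonneg_of_sq_le_mul hsum (hdet ▸ hw)
    exact ⟨hb, ha, hc, hw⟩

theorem stmt_10 (l₁ l₂ w₂ : ℝ) (h₁ : |l₁| ≤ 1) (h₂ : |l₂| ≤ 1) (hw : |w₂| ≤ 1) :
    let χ : Matrix (Fin 3) (Fin 3) ℝ :=
      ((1:ℝ)/2) • !![1 + l₁ + l₂, 0, w₂; 0, 1 + l₁ - l₂, 0; w₂, 0, 1 - l₁ + l₂]
    χ.PosSemidef ↔ (1 + l₁ - l₂ ≥ 0 ∧ w₂ ^ 2 ≤ (l₂ + 1) ^ 2 - l₁ ^ 2) :=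
  stmt_10_general l₁ l₂ w₂ h₂
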